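/- arXiv:2205.10467 — 4 statements merged into one kernel-verified Lean document; each statement's English description precedes it below -/
import Mathlib

section
/- Let θ̂_u⁽ⁿ⁾, θ̂_b⁽ⁿ⁾, σ̂_u,n², σ̂_b,n², σ̂_bu,n be sequences of real-valued random variables on a probability space such that θ̂_u⁽ⁿ⁾ → θ₀ in probability, θ̂_b⁽ⁿ⁾ → θ₀ + μ in probability, n·σ̂_u,n² → ν_u in probability, n·σ̂_b,n² → ν_b in probability, and n·σ̂_bu,n → ν_bu in probability for finite real constants ν_u, ν_b, ν_bu, and such that the denominator (θ̂_u⁽ⁿ⁾ − θ̂_b⁽ⁿ⁾)² + σ̂_u,n² + σ̂_b,n² − 2σ̂_bu,n is almost surely strictly positive for each n. If μ ≠ 0, then the estimated weight λ̂_n = (σ̂_u,n² − σ̂_bu,n)/((θ̂_u⁽ⁿ⁾ − θ̂_b⁽ⁿ⁾)² + σ̂_u,n² + σ̂_b,n² − 2σ̂_bu,n) converges to 0 in probability. -/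
open MeasureTheory Filter Topology

/-! Since `n σ̂²` converges, the variance and covariance estimates themselves tend to `0` in
probability, while `θ̂_u − θ̂_b → −μ`. Hence `λ̂_n` is a fixed rational function of a random vector
converging in probability to `((−μ, 0), 0, 0)`, where that function is continuous (its denominator
is `μ² ≠ 0`) and vanishes; the continuous mapping theorem for constant limits concludes. -/

namespace MeasureTheory

variable {α ι E F : Type*} {m : MeasurableSpace α} {μ : Measure α} {l : Filter ι}

theorem TendstoInMeasure.prodMk [PseudoEMetricSpace E] [PseudoEMetricSpace F]
    {f : ι → α → E} {g : α → E} {f' : ι → α → F} {g' : α → F}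
    (hf : TendstoInMeasure μ f l g) (hf' : TendstoInMeasure μ f' l g') :
    TendstoInMeasure μ (fun i x => (f i x, f' i x)) l (fun x => (g x, g' x)) := by
  intro ε hε
  have hsum := (hf ε hε).add (hf' ε hε)
  rw [add_zero] at hsum
  refine tendsto_of_tendsto_of_tendsto_of_le_of_le tendsto_const_nhds hsum (fun _ => zero_le)
    fun i => ?_
  simp only [Prod.edist_eq, le_max_iff, Set.ofPred_or]
  exact measure_union_le _ _

theorem TendstoInMeasure.comp_continuousAt [PseudoEMetricSpace E] [PseudoEMetricSpace F]
    {f : ι → α → E} {c : E} (hf : TendstoInMeasure μ f l (fun _ => c)) {φ : E → F}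
    (hφ : ContinuousAt φ c) :
    TendstoInMeasure μ (fun i x => φ (f i x)) l (fun _ => φ c) := by
  intro ε hε
  obtain ⟨δ, hδ, hδε⟩ := EMetric.continuousAt_iff.mp hφ ε hε
  refine tendsto_of_tendsto_of_tendsto_of_le_of_le tendsto_const_nhds (hf δ hδ)
    (fun _ => zero_le) fun i => measure_mono fun x hx => ?_
  by_contra hlt
  exact (not_le.mpr (hδε (not_le.mp hlt))) hx

theorem tendstoInMeasure_const_of_tendsto [PseudoEMetricSpace E] {a : ι → E} {c : E}
    (ha : Tendsto a l (𝓝 c)) : TendstoInMeasure μ (fun i _ => a i) l (fun _ => c) := by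
  intro ε hε
  refine tendsto_const_nhds.congr' ?_
  filter_upwards [EMetric.tendsto_nhds.mp ha ε hε] with i hi
  simp [not_le.mpr hi]

theorem tendstoInMeasure_zero_of_natCast_mul {X : ℕ → α → ℝ} {c : ℝ}
    (hX : TendstoInMeasure μ (fun (n : ℕ) x => (n : ℝ) * X n x) atTop (fun _ => c)) :
    TendstoInMeasure μ X atTop (fun _ => 0) := by
  have h := ((tendstoInMeasure_const_of_tendsto (tendsto_inv_atTop_zero.comp
    tendsto_natCast_atTop_atTop)).prodMk hX).comp_continuousAt
    (φ := fun p : ℝ × ℝ => p.1 * p.2) continuous_mul.continuousAt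
  refine TendstoInMeasure.congr' ?_ (by simp) h
  filter_upwards [eventually_ne_atTop 0] with n hn
  exact Eventually.of_forall fun x => inv_mul_cancel_left₀ (Nat.cast_ne_zero.mpr hn) _

end MeasureTheory

theorem lambda_hat_tendsto_zero_in_probability_general
    {Ω : Type*} [MeasurableSpace Ω] (P : Measure Ω)
    (θu θb σu2 σb2 σbu : ℕ → Ω → ℝ) (θ₀ μ νu νb νbu : ℝ)
    (hθu : TendstoInMeasure P θu atTop (fun _ => θ₀))
    (hθb : TendstoInMeasure P θb atTop (fun _ => θ₀ + μ))
    (hσu : TendstoInMeasure P (fun (n : ℕ) ω => (n : ℝ) * σu2 n ω) atTop (fun _ => νu))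
    (hσb : TendstoInMeasure P (fun (n : ℕ) ω => (n : ℝ) * σb2 n ω) atTop (fun _ => νb))
    (hσbu : TendstoInMeasure P (fun (n : ℕ) ω => (n : ℝ) * σbu n ω) atTop (fun _ => νbu))
    (hμ : μ ≠ 0) :
    TendstoInMeasure P
      (fun n ω => (σu2 n ω - σbu n ω) /
        ((θu n ω - θb n ω) ^ 2 + σu2 n ω + σb2 n ω - 2 * σbu n ω))
      atTop (fun _ => 0) := by
  have hdiff : TendstoInMeasure P (fun n ω => θu n ω - θb n ω) atTop (fun _ => -μ) := by
    convert (hθu.prodMk hθb).comp_continuousAt (φ := fun p : ℝ × ℝ => p.1 - p.2)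
      continuous_sub.continuousAt using 2
    ring
  have hweight : ContinuousAt (fun p : (ℝ × ℝ) × ℝ × ℝ =>
      (p.1.2 - p.2.2) / (p.1.1 ^ 2 + p.1.2 + p.2.1 - 2 * p.2.2)) ((-μ, 0), 0, 0) := by
    refine ContinuousAt.div (by fun_prop) (by fun_prop) ?_
    simpa using hμ
  simpa using ((hdiff.prodMk (tendstoInMeasure_zero_of_natCast_mul hσu)).prodMk
    ((tendstoInMeasure_zero_of_natCast_mul hσb).prodMk
      (tendstoInMeasure_zero_of_natCast_mul hσbu))).comp_continuousAt hweight

/-- If `θ̂_u⁽ⁿ⁾ → θ₀`, `θ̂_b⁽ⁿ⁾ → θ₀ + μ` in probability, the scaled variance/covariance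
estimates converge in probability to finite constants, and the denominator is a.s. positive,
then for `μ ≠ 0` the plug-in weight `λ̂_n` converges to `0` in probability. -/
theorem lambda_hat_tendsto_zero_in_probability
    {Ω : Type*} [MeasurableSpace Ω] (P : Measure Ω) [IsProbabilityMeasure P]
    (θu θb σu2 σb2 σbu : ℕ → Ω → ℝ) (θ₀ μ νu νb νbu : ℝ)
    (hθu : TendstoInMeasure P θu atTop (fun _ => θ₀))
    (hθb : TendstoInMeasure P θb atTop (fun _ => θ₀ + μ))
    (hσu : TendstoInMeasure P (fun (n : ℕ) ω => (n : ℝ) * σu2 n ω) atTop (fun _ => νu))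
    (hσb : TendstoInMeasure P (fun (n : ℕ) ω => (n : ℝ) * σb2 n ω) atTop (fun _ => νb))
    (hσbu : TendstoInMeasure P (fun (n : ℕ) ω => (n : ℝ) * σbu n ω) atTop (fun _ => νbu))
    (hden : ∀ n, ∀ᵐ ω ∂P,
      (θu n ω - θb n ω) ^ 2 + σu2 n ω + σb2 n ω - 2 * σbu n ω > 0)
    (hμ : μ ≠ 0) :
    TendstoInMeasure P
      (fun n ω => (σu2 n ω - σbu n ω) /
        ((θu n ω - θb n ω) ^ 2 + σu2 n ω + σb2 n ω - 2 * σbu n ω))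
      atTop (fun _ => 0) :=
  lambda_hat_tendsto_zero_in_probability_general P θu θb σu2 σb2 σbu θ₀ μ νu νb νbu hθu hθb hσu hσb
    hσbu hμ
end

section
/- Let θ̂_u and θ̂_b be square-integrable real-valued random variables on a probability space with E[θ̂_u] = θ₀, Var(θ̂_u) = σ_u² > 0, Var(θ̂_b) = σ_b², Cov(θ̂_u, θ̂_b) = σ_bu, and σ_u² + σ_b² − 2σ_bu > 0. Define λ̂ = (σ_u² − σ_bu)/((θ̂_u − θ̂_b)² + σ_u² + σ_b² − 2σ_bu) and θ̂_λ̂ = λ̂·θ̂_b + (1 − λ̂)·θ̂_u. Let c = σ_b/σ_u and let ρ = σ_bu/(σ_u·σ_b) if σ_b > 0 and ρ = 0 if σ_b = 0. Then E[(θ̂_λ̂ − θ₀)²] ≤ σ_u²·(1 + (1/2)·|1 − ρc|/√(1 − 2ρc + c²))². -/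
/-!
Writing `d = θ̂_u - θ̂_b` and `v = σ_u² + σ_b² - 2σ_bu`, the error of the combined estimator is
`θ̂_λ̂ - θ₀ = (θ̂_u - θ₀) - g` with `g = (σ_u² - σ_bu) d / (d² + v)`. By AM-GM, `d² + v ≥ 2|d|√v`,
so `|g| ≤ M := |σ_u² - σ_bu| / (2√v)` uniformly; expanding the square and using
`E|θ̂_u - θ₀| ≤ σ_u` gives `E[(θ̂_λ̂ - θ₀)²] ≤ (σ_u + M)²`. Since `ρc = σ_bu / σ_u²` (also when `σ_b = 0`, as then `σ_bu = 0`)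
and `c² = σ_b² / σ_u²`, this is the stated bound.
-/

open MeasureTheory ProbabilityTheory

section

variable {Ω : Type*} [MeasurableSpace Ω] {μ : Measure Ω}

lemma integral_mul_sub_integral_eq_zero_of_variance_eq_zero [IsFiniteMeasure μ]
    (X : Ω → ℝ) {Y : Ω → ℝ} (hY : MemLp Y 2 μ) (h : variance Y μ = 0) :
    ∫ ω, X ω * (Y ω - ∫ x, Y x ∂μ) ∂μ = 0 := by
  rw [← integral_zero Ω ℝ]
  refine integral_congr_ae ?_
  filter_upwards [ae_eq_integral_of_variance_eq_zero hY h] with ω hω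
  simp [hω]

lemma sq_integral_abs_le_integral_sq [IsProbabilityMeasure μ] {X : Ω → ℝ} (hX : MemLp X 2 μ) :
    (∫ ω, |X ω| ∂μ) ^ 2 ≤ ∫ ω, X ω ^ 2 ∂μ := by
  have h := variance_eq_sub hX.abs
  have := variance_nonneg |X| μ
  simp only [Pi.pow_apply, Pi.abs_apply, sq_abs] at h
  linarith

lemma integral_sq_sub_le_of_abs_le [IsProbabilityMeasure μ] {f g : Ω → ℝ} (hf : MemLp f 2 μ)
    (hg : AEStronglyMeasurable g μ) {M : ℝ} (hM : 0 ≤ M) (hgM : ∀ ω, |g ω| ≤ M) :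
    ∫ ω, (f ω - g ω) ^ 2 ∂μ ≤ (√(∫ ω, f ω ^ 2 ∂μ) + M) ^ 2 := by
  have hg2 : MemLp g 2 μ := .of_bound hg M (.of_forall fun ω => by simpa using hgM ω)
  have hf2 : Integrable (fun ω => f ω ^ 2) μ := hf.integrable_sq
  have hfabs : Integrable (fun ω => 2 * M * |f ω|) μ :=
    (hf.integrable one_le_two).abs.const_mul _
  have hpt : ∀ ω, (f ω - g ω) ^ 2 ≤ f ω ^ 2 + 2 * M * |f ω| + M ^ 2 := fun ω => by
    have hfg : -(f ω * g ω) ≤ |f ω| * M := (neg_le_abs _).trans <|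
      (abs_mul _ _).trans_le (mul_le_mul_of_nonneg_left (hgM ω) (abs_nonneg _))
    have hg_sq : g ω ^ 2 ≤ M ^ 2 := by
      rw [← sq_abs]
      exact pow_le_pow_left₀ (abs_nonneg _) (hgM ω) 2
    nlinarith
  have habs : ∫ ω, |f ω| ∂μ ≤ √(∫ ω, f ω ^ 2 ∂μ) :=
    Real.le_sqrt_of_sq_le (sq_integral_abs_le_integral_sq hf)
  calc ∫ ω, (f ω - g ω) ^ 2 ∂μ ≤ ∫ ω, (f ω ^ 2 + 2 * M * |f ω| + M ^ 2) ∂μ :=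
        integral_mono (hf.sub hg2).integrable_sq ((hf2.add hfabs).add (integrable_const _)) hpt
    _ = ∫ ω, f ω ^ 2 ∂μ + 2 * M * ∫ ω, |f ω| ∂μ + M ^ 2 := by
        have hsum : Integrable (fun ω => f ω ^ 2 + 2 * M * |f ω|) μ := hf2.add hfabs
        rw [integral_add hsum (integrable_const _), integral_add hf2 hfabs,
          integral_const_mul]
        simp
    _ ≤ (√(∫ ω, f ω ^ 2 ∂μ) + M) ^ 2 := by
        have := Real.sq_sqrt (integral_nonneg (μ := μ) fun ω => sq_nonneg (f ω))
        nlinarith [mul_le_mul_of_nonneg_left habs hM]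

end

lemma abs_mul_div_sq_add_le (a d : ℝ) {v : ℝ} (hv : 0 < v) :
    |a * d / (d ^ 2 + v)| ≤ |a| / (2 * √v) := by
  have hsv := Real.sq_sqrt hv.le
  have hD : 0 < d ^ 2 + v := by positivity
  have hamgm : 2 * |d| * √v ≤ d ^ 2 + v := by nlinarith [sq_nonneg (|d| - √v), sq_abs d]
  rw [abs_div, abs_mul, abs_of_pos hD, div_le_div_iff₀ hD (by positivity)]
  nlinarith [abs_nonneg a]

lemma continuous_mul_div_sq_add (a : ℝ) {v : ℝ} (hv : 0 < v) :
    Continuous fun d : ℝ => a * d / (d ^ 2 + v) :=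
  by fun_prop (disch := intro; positivity)

lemma corr_mul_sdRatio_eq {σu2 σb2 σbu : ℝ} (hu : 0 < σu2) (hb : 0 ≤ σb2)
    (hbu : σb2 = 0 → σbu = 0) :
    (if σb2 = 0 then 0 else σbu / (√σu2 * √σb2)) * (√σb2 / √σu2) = σbu / σu2 := by
  split_ifs with h
  · simp [hbu h]
  · have hsb : √σb2 ≠ 0 := (Real.sqrt_pos.mpr (lt_of_le_of_ne hb (Ne.symm h))).ne'
    have hsu : √σu2 ≠ 0 := (Real.sqrt_pos.mpr hu).ne'
    field_simp
    rw [Real.sq_sqrt hu.le]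

lemma mul_sq_one_add_half_abs_div_sqrt {σu2 σb2 σbu ρ c : ℝ} (hu : 0 < σu2)
    (hv : 0 < σu2 + σb2 - 2 * σbu) (hc : c ^ 2 = σb2 / σu2) (hρc : ρ * c = σbu / σu2) :
    σu2 * (1 + (1 / 2) * |1 - ρ * c| / √(1 - 2 * ρ * c + c ^ 2)) ^ 2
      = (√σu2 + |σu2 - σbu| / (2 * √(σu2 + σb2 - 2 * σbu))) ^ 2 := by
  have hsu : 0 < √σu2 := Real.sqrt_pos.mpr hu
  have hsv : 0 < √(σu2 + σb2 - 2 * σbu) := Real.sqrt_pos.mpr hv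
  have habs : |1 - ρ * c| = |σu2 - σbu| / σu2 := by
    rw [hρc, one_sub_div hu.ne', abs_div, abs_of_pos hu]
  have hroot : √(1 - 2 * ρ * c + c ^ 2) = √(σu2 + σb2 - 2 * σbu) / √σu2 := by
    rw [← Real.sqrt_div' _ hu.le]
    congr 1
    rw [mul_assoc, hρc, hc]
    field_simp
    ring
  rw [habs, hroot]
  set s := √σu2 with hs
  set t := √(σu2 + σb2 - 2 * σbu)
  rw [← Real.sq_sqrt hu.le, ← hs]
  field_simp

/-- Bound on the MSE of the combination estimator (known variances/covariance):
`E[(θ̂_λ̂ − θ₀)²] ≤ σ_u²·(1 + (1/2)·|1 − ρc|/√(1 − 2ρc + c²))²`. -/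
theorem mse_bound_cov
    {Ω : Type*} [MeasurableSpace Ω] (P : Measure Ω) [IsProbabilityMeasure P]
    (θu θb : Ω → ℝ) (θ₀ σu2 σb2 σbu c ρ : ℝ)
    (hθu : MemLp θu 2 P) (hθb : MemLp θb 2 P)
    (hEu : ∫ ω, θu ω ∂P = θ₀)
    (hVu : variance θu P = σu2) (hσu2pos : 0 < σu2)
    (hVb : variance θb P = σb2)
    (hCov : ∫ ω, (θu ω - θ₀) * (θb ω - ∫ x, θb x ∂P) ∂P = σbu)
    (hv : σu2 + σb2 - 2 * σbu > 0)
    (hc : c = Real.sqrt σb2 / Real.sqrt σu2)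
    (hρ : ρ = if σb2 = 0 then 0 else σbu / (Real.sqrt σu2 * Real.sqrt σb2)) :
    ∫ ω, (((σu2 - σbu) / ((θu ω - θb ω) ^ 2 + σu2 + σb2 - 2 * σbu)) * θb ω
        + (1 - (σu2 - σbu) / ((θu ω - θb ω) ^ 2 + σu2 + σb2 - 2 * σbu)) * θu ω
        - θ₀) ^ 2 ∂P
      ≤ σu2 * (1 + (1 / 2) * |1 - ρ * c| / Real.sqrt (1 - 2 * ρ * c + c ^ 2)) ^ 2 := by
  have hσb2 : 0 ≤ σb2 := hVb ▸ variance_nonneg θb P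
  have hσbu : σb2 = 0 → σbu = 0 := fun h =>
    hCov ▸ integral_mul_sub_integral_eq_zero_of_variance_eq_zero _ hθb (hVb.trans h)
  have hu2 : ∫ ω, (θu ω - θ₀) ^ 2 ∂P = σu2 := by
    rw [← hVu, variance_eq_integral hθu.aemeasurable, hEu]
  set v := σu2 + σb2 - 2 * σbu
  set g := fun ω => (σu2 - σbu) * (θu ω - θb ω) / ((θu ω - θb ω) ^ 2 + v)
  have hg : AEStronglyMeasurable g P :=
    (continuous_mul_div_sq_add (σu2 - σbu) hv).comp_aestronglyMeasurable (hθu.1.sub hθb.1)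
  have herr : ∀ ω, (σu2 - σbu) / ((θu ω - θb ω) ^ 2 + σu2 + σb2 - 2 * σbu) * θb ω
      + (1 - (σu2 - σbu) / ((θu ω - θb ω) ^ 2 + σu2 + σb2 - 2 * σbu)) * θu ω - θ₀
      = (θu ω - θ₀) - g ω := fun ω => by
    have : (θu ω - θb ω) ^ 2 + σu2 + σb2 - 2 * σbu ≠ 0 := by
      nlinarith [sq_nonneg (θu ω - θb ω)]
    field_simp
    ring
  calc _ = ∫ ω, ((θu ω - θ₀) - g ω) ^ 2 ∂P := by simp_rw [herr]
    _ ≤ (√(∫ ω, (θu ω - θ₀) ^ 2 ∂P) + |σu2 - σbu| / (2 * √v)) ^ 2 :=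
        integral_sq_sub_le_of_abs_le (hθu.sub (memLp_const θ₀)) hg (by positivity)
          fun ω => abs_mul_div_sq_add_le _ _ hv
    _ = (√σu2 + |σu2 - σbu| / (2 * √v)) ^ 2 := by rw [hu2]
    _ = _ := by
      subst hc hρ
      refine (mul_sq_one_add_half_abs_div_sqrt hσu2pos hv ?_
        (corr_mul_sdRatio_eq hσu2pos hσb2 hσbu)).symm
      rw [div_pow, Real.sq_sqrt hσb2, Real.sq_sqrt hσu2pos.le]
end

section
/- Let a, s, v be real numbers with v > 0. Define f : ℝ → ℝ by f(Δ) = 2·(s/(Δ² + v))·Δ·a + (s/(Δ² + v))²·Δ². Then the supremum of f over Δ ∈ ℝ equals |s|·|a|/√v + s²/(4v), and it is attained at Δ = √v if s·a ≥ 0 and at Δ = −√v if s·a < 0. -/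
open Filter

/-- The supremum over `Δ ∈ ℝ` of
`f(Δ) = 2·(s/(Δ² + v))·Δ·a + (s/(Δ² + v))²·Δ²` equals `|s|·|a|/√v + s²/(4v)`,
attained at `Δ = √v` when `s·a ≥ 0` and at `Δ = −√v` when `s·a < 0`. -/
theorem excess_error_supremum
    (a s v : ℝ) (hv : 0 < v) (f : ℝ → ℝ)
    (hf : ∀ Δ : ℝ, f Δ = 2 * (s / (Δ ^ 2 + v)) * Δ * a + (s / (Δ ^ 2 + v)) ^ 2 * Δ ^ 2) :
    IsGreatest (Set.range f) (|s| * |a| / Real.sqrt v + s ^ 2 / (4 * v))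
    ∧ (0 ≤ s * a → f (Real.sqrt v) = |s| * |a| / Real.sqrt v + s ^ 2 / (4 * v))
    ∧ (s * a < 0 → f (-Real.sqrt v) = |s| * |a| / Real.sqrt v + s ^ 2 / (4 * v)) := by
  have hw : 0 < Real.sqrt v := Real.sqrt_pos.mpr hv
  set w := Real.sqrt v with hwdef
  have hv2 : w ^ 2 = v := Real.sq_sqrt hv.le
  -- value at w
  have hfw : f w = s * a / w + s ^ 2 / (4 * v) := by
    rw [hf, hv2]
    rw [← hv2]
    field_simp
    ring
  have hfmw : f (-w) = -(s * a) / w + s ^ 2 / (4 * v) := by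
    rw [hf, neg_pow, ← hv2]
    field_simp
    ring
  -- upper bound
  have hub : ∀ Δ : ℝ, f Δ ≤ |s| * |a| / w + s ^ 2 / (4 * v) := by
    intro Δ
    rw [hf, ← hv2]
    have hD : 0 < Δ ^ 2 + w ^ 2 := by positivity
    have h1 : s * Δ * a ≤ |s| * |a| * |Δ| := by
      calc s * Δ * a ≤ |s * Δ * a| := le_abs_self _
      _ = |s| * |a| * |Δ| := by rw [abs_mul, abs_mul]; ring
    have h3 : 0 ≤ Δ ^ 2 + w ^ 2 - 2 * w * |Δ| := by
      nlinarith [sq_nonneg (|Δ| - w), sq_abs Δ]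
    have hLHS : 2 * (s / (Δ ^ 2 + w ^ 2)) * Δ * a + (s / (Δ ^ 2 + w ^ 2)) ^ 2 * Δ ^ 2
        = (2 * s * Δ * a * (Δ ^ 2 + w ^ 2) + s ^ 2 * Δ ^ 2) / (Δ ^ 2 + w ^ 2) ^ 2 := by
      field_simp
    have hRHS : |s| * |a| / w + s ^ 2 / (4 * w ^ 2)
        = (4 * w * |s| * |a| + s ^ 2) / (4 * w ^ 2) := by
      field_simp
    rw [hLHS, hRHS, div_le_div_iff₀ (by positivity) (by positivity)]
    nlinarith [sq_nonneg (s * (Δ ^ 2 - w ^ 2)),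
      mul_nonneg (mul_nonneg (mul_nonneg hw.le hD.le) (mul_nonneg (abs_nonneg s) (abs_nonneg a))) h3,
      mul_nonneg (mul_nonneg (mul_nonneg hw.le hw.le) hD.le) (sub_nonneg.mpr h1)]
  have habs : |s| * |a| = |s * a| := (abs_mul s a).symm
  have hpos : 0 ≤ s * a → f w = |s| * |a| / w + s ^ 2 / (4 * v) := by
    intro h
    rw [hfw, habs, abs_of_nonneg h]
  have hneg : s * a < 0 → f (-w) = |s| * |a| / w + s ^ 2 / (4 * v) := by
    intro h
    rw [hfmw, habs, abs_of_neg h]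
  refine ⟨⟨?_, ?_⟩, hpos, hneg⟩
  · rcases le_or_gt 0 (s * a) with h | h
    · exact ⟨w, hpos h⟩
    · exact ⟨-w, hneg h⟩
  · rintro x ⟨Δ, rfl⟩
    exact hub Δ
end

section
/- Fix real numbers u, b, θ₀, σ_u², σ_b², σ_bu with σ_u² + σ_b² − 2σ_bu > 0, and set s = σ_u² − σ_bu and v = σ_u² + σ_b² − 2σ_bu. For every real μ, defining λ(μ) = s/((u − b − μ)² + v) and θ(μ) = λ(μ)·(b + μ) + (1 − λ(μ))·u, one has the uniform-in-μ bound (θ(μ) − θ₀)² ≤ (u − θ₀)² + |s|·|u − θ₀|/√v + s²/(4v). -/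
/-- Deterministic bound, uniform over all values of the bias `μ`, on the squared error of
the realized combination estimator: with `s = σ_u² − σ_bu` and `v = σ_u² + σ_b² − 2σ_bu`,
`(θ(μ) − θ₀)² ≤ (u − θ₀)² + |s|·|u − θ₀|/√v + s²/(4v)`. -/
theorem combination_squared_error_uniform_bound
    (u b θ₀ σu2 σb2 σbu : ℝ) (hv : σu2 + σb2 - 2 * σbu > 0)
    (s v : ℝ) (hs : s = σu2 - σbu) (hvdef : v = σu2 + σb2 - 2 * σbu) :
    ∀ μ : ℝ,
      ((s / ((u - b - μ) ^ 2 + v)) * (b + μ)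
        + (1 - s / ((u - b - μ) ^ 2 + v)) * u - θ₀) ^ 2
      ≤ (u - θ₀) ^ 2 + |s| * |u - θ₀| / Real.sqrt v + s ^ 2 / (4 * v) := by
  intro μ
  have hv0 : 0 < v := by rw [hvdef]; exact hv
  set d : ℝ := u - b - μ with hd
  have hden : 0 < d ^ 2 + v := by positivity
  have hsv : 0 < Real.sqrt v := Real.sqrt_pos.mpr hv0
  set t : ℝ := s / (d ^ 2 + v) * d with ht
  -- key bound |t| ≤ |s| / (2 √v)
  have hamgm : 2 * Real.sqrt v * |d| ≤ d ^ 2 + v := by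
    have h := sq_nonneg (|d| - Real.sqrt v)
    have hsq : Real.sqrt v ^ 2 = v := Real.sq_sqrt hv0.le
    have hd2 : |d| ^ 2 = d ^ 2 := sq_abs d
    nlinarith [h]
  have htb : |t| ≤ |s| / (2 * Real.sqrt v) := by
    rw [ht, abs_mul, abs_div, abs_of_pos hden]
    rw [div_mul_eq_mul_div, div_le_div_iff₀ hden (by positivity)]
    calc |s| * |d| * (2 * Real.sqrt v) = |s| * (2 * Real.sqrt v * |d|) := by ring
      _ ≤ |s| * (d ^ 2 + v) := by
          exact mul_le_mul_of_nonneg_left hamgm (abs_nonneg s)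
  -- rewrite the estimator error
  have hrw : (s / (d ^ 2 + v)) * (b + μ) + (1 - s / (d ^ 2 + v)) * u - θ₀
      = (u - θ₀) - t := by
    rw [ht]; field_simp; ring
  rw [hrw]
  have habs_a : |u - θ₀| ^ 2 = (u - θ₀) ^ 2 := sq_abs _
  have habs_t : |t| ^ 2 = t ^ 2 := sq_abs _
  have h1 : ((u - θ₀) - t) ^ 2 ≤ (u - θ₀) ^ 2 + 2 * |u - θ₀| * |t| + t ^ 2 := by
    nlinarith [abs_mul (u - θ₀) t, le_abs_self ((u - θ₀) * t), neg_abs_le ((u - θ₀) * t),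
      abs_nonneg (u - θ₀), abs_nonneg t]
  have h2 : 2 * |u - θ₀| * |t| ≤ |s| * |u - θ₀| / Real.sqrt v := by
    have := mul_le_mul_of_nonneg_left htb (by positivity : (0:ℝ) ≤ 2 * |u - θ₀|)
    calc 2 * |u - θ₀| * |t| ≤ 2 * |u - θ₀| * (|s| / (2 * Real.sqrt v)) := this
      _ = |s| * |u - θ₀| / Real.sqrt v := by field_simp
  have h3 : t ^ 2 ≤ s ^ 2 / (4 * v) := by
    have h := mul_self_le_mul_self (abs_nonneg t) htb
    have hsq : Real.sqrt v ^ 2 = v := Real.sq_sqrt hv0.le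
    have : |t| * |t| = t ^ 2 := by rw [← sq_abs t]; ring
    rw [this] at h
    calc t ^ 2 ≤ |s| / (2 * Real.sqrt v) * (|s| / (2 * Real.sqrt v)) := h
      _ = s ^ 2 / (4 * v) := by
          rw [div_mul_div_comm, ← sq_abs s]
          congr 1
          · ring
          · nlinarith [hsq]
  linarith
end
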